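/- arXiv:2507.13829 — 4 statements merged into one kernel-verified Lean document; each statement's English description precedes it below -/
import Mathlib

section
/- Let a, b ∈ ℝ and let x: ℝ → ℂ be the linear chirp x(t) = e^{2iπt(a+bt)}. Let σ_b = √(2/(1+4b²)). Then for every τ, ω ∈ ℝ, Spec(x)(τ+iω) = σ_b · exp(−π σ_b² (ω − (a + 2bτ))²). -/
open Real MeasureTheory

/-- The Gaussian-window spectrogram:
`Spec y (τ+iω) = |∫ y(t) 2^{1/4} e^{−π(t−τ)²} e^{−2iπωt} dt|²`. -/
noncomputable def Spec (y : ℝ → ℂ) (z : ℂ) : ℝ :=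
  ‖∫ t : ℝ, y t * (((2 : ℝ) ^ ((1 : ℝ) / 4) : ℝ) : ℂ)
    * Complex.exp (-(π : ℂ) * ((t : ℂ) - (z.re : ℂ)) ^ 2)
    * Complex.exp (-2 * (π : ℂ) * Complex.I * (z.im : ℂ) * (t : ℂ))‖ ^ 2

/-!
The windowed chirp `t ↦ x(t) e^{−π(t−τ)²} e^{−2iπωt}` is `exp (B t² + C t + D)` with
`B = π(2ib − 1)`, `C = 2π(τ + i(a − ω))`, `D = −πτ²`. Since `Re B = −π < 0`, the complex Gaussian
integral gives `|∫ exp (B t² + C t + D)|² = (π / |B|) exp (2 Re (D − C²/(4B)))`, and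
`|B| = π √(1 + 4b²)`, `Re (D − C²/(4B)) = −π (ω − a − 2bτ)² / (1 + 4b²)`.
-/

section

open Complex

theorem norm_sq_integral_cexp_quadratic {b : ℂ} (hb : b.re < 0) (c d : ℂ) :
    ‖∫ x : ℝ, cexp (b * x ^ 2 + c * x + d)‖ ^ 2
      = π / ‖b‖ * Real.exp (2 * (d - c ^ 2 / (4 * b)).re) := by
  have hsqrt := norm_cpow_real (π / -b) (1 / 2)
  push_cast at hsqrt
  rw [integral_cexp_quadratic hb, norm_mul, hsqrt, norm_exp, mul_pow, ← Real.rpow_natCast,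
    ← Real.rpow_mul (norm_nonneg _), ← Real.exp_nat_mul]
  norm_num [norm_div, abs_of_pos pi_pos]

theorem norm_pi_mul_two_mul_I_sub_one (b : ℝ) :
    ‖(π : ℂ) * (2 * b * I - 1)‖ = π * √(1 + 4 * b ^ 2) := by
  rw [norm_mul, norm_real, Real.norm_of_nonneg pi_pos.le, norm_def, normSq_apply]
  congr 2
  simp only [sub_re, mul_re, sub_im, mul_im, re_ofNat, im_ofNat, ofReal_re, ofReal_im, I_re,
    I_im, one_re, one_im]
  ring

theorem re_chirp_gaussian_exponent (a b τ ω : ℝ) :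
    (-(π : ℂ) * τ ^ 2 - (2 * π * (τ + (a - ω) * I)) ^ 2 / (4 * (π * (2 * b * I - 1)))).re
      = -π * (ω - (a + 2 * b * τ)) ^ 2 / (1 + 4 * b ^ 2) := by
  have hpos : 0 < 1 + 4 * b ^ 2 := by positivity
  rw [sub_re, div_re]
  simp only [pow_two, neg_mul, neg_re, mul_re, ofReal_re, ofReal_im, mul_zero, sub_zero, mul_im,
    zero_mul, add_zero, re_ofNat, im_ofNat, add_re, sub_re, I_re, sub_im, sub_self, I_im, mul_one,
    add_im, zero_add, one_re, zero_sub, mul_neg, one_im, neg_zero, normSq_apply, neg_neg]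
  field_simp
  ring

theorem spec_eq_sqrt_two_mul (y : ℝ → ℂ) (τ ω : ℝ) :
    Spec y (τ + ω * I)
      = √2 * ‖∫ t : ℝ, y t * cexp (-π * (t - τ) ^ 2) * cexp (-2 * π * I * ω * t)‖ ^ 2 := by
  have hwindow : ((2 : ℝ) ^ ((1 : ℝ) / 4)) ^ 2 = √2 := by
    rw [← Real.rpow_natCast, ← Real.rpow_mul zero_le_two, sqrt_eq_rpow]
    norm_num
  have hcomm : ∀ t : ℝ, y t * ((2 ^ ((1 : ℝ) / 4) : ℝ) : ℂ) * cexp (-π * (t - τ) ^ 2)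
      * cexp (-2 * π * I * ω * t)
      = ((2 ^ ((1 : ℝ) / 4) : ℝ) : ℂ)
        * (y t * cexp (-π * (t - τ) ^ 2) * cexp (-2 * π * I * ω * t)) :=
    fun t => by ring
  simp only [Spec, add_re, add_im, ofReal_re, ofReal_im, mul_re, mul_im, I_re, I_im, mul_zero,
    sub_zero, add_zero, mul_one, zero_add]
  simp_rw [hcomm, integral_const_mul, norm_mul, mul_pow, norm_real,
    Real.norm_of_nonneg (rpow_nonneg zero_le_two _), hwindow]

end

/-- The spectrogram of the linear chirp `x(t) = e^{2iπt(a+bt)}` is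
`σ_b exp(−π σ_b² (ω − (a + 2bτ))²)` with `σ_b = √(2/(1+4b²))`. -/
theorem spec_linear_chirp (a b : ℝ) (σ : ℝ) (hσ : σ = Real.sqrt (2 / (1 + 4 * b ^ 2)))
    (x : ℝ → ℂ)
    (hx : ∀ t : ℝ, x t = Complex.exp (2 * (π : ℂ) * Complex.I * (t : ℂ)
      * ((a : ℂ) + (b : ℂ) * (t : ℂ))))
    (τ ω : ℝ) :
    Spec x ((τ : ℂ) + (ω : ℂ) * Complex.I) =
      σ * Real.exp (-π * σ ^ 2 * (ω - (a + 2 * b * τ)) ^ 2) := by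
  have hB : ((π : ℂ) * (2 * b * Complex.I - 1)).re < 0 := by simp [pi_pos]
  have hquadratic : ∀ t : ℝ,
      x t * Complex.exp (-π * (t - τ) ^ 2) * Complex.exp (-2 * π * Complex.I * ω * t)
        = Complex.exp (π * (2 * b * Complex.I - 1) * t ^ 2
            + 2 * π * (τ + (a - ω) * Complex.I) * t + -π * τ ^ 2) := by
    intro t
    rw [hx, ← Complex.exp_add, ← Complex.exp_add]
    ring_nf
  rw [spec_eq_sqrt_two_mul, funext hquadratic, norm_sq_integral_cexp_quadratic hB,
    norm_pi_mul_two_mul_I_sub_one, re_chirp_gaussian_exponent, hσ, sq_sqrt (by positivity),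
    sqrt_div zero_le_two]
  field_simp
end

section
/- Let a₁, a₂, b ∈ ℝ, γ₁, γ₂ > 0, σ_b = √(2/(1+4b²)), and let x: ℝ → ℂ be the pair of parallel linear chirps x(t) = √γ₁ e^{2iπt(a₁+bt)} + √γ₂ e^{2iπt(a₂+bt)}. Then for every z = τ+iω ∈ ℂ, Spec(x)(z) = σ_b (γ₁ e^{−2πr²} + γ₂ e^{−2π(r−a)²} + 2√(γ₁γ₂) e^{−πr² − π(r−a)²} cos(2πas)), where a = (σ_b/√2)(a₂−a₁), r = (σ_b/√2)(ω − 2bτ − a₁), and s = (σ_b/√2)(τ + 2bω − (a₁+a₂)b). -/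
open Real MeasureTheory

/-!
Windowing and modulating the chirp `e^{2iπt(a+bt)}` gives `e^{Bt² + Ct + D}` with
`Re B = -π < 0`, so its Gabor coefficient is the explicit Gaussian integral
`(1 - 2ib)^{-1/2} e^{w}`. The spectrogram of the pair is therefore
`√2 |1 - 2ib|^{-1} · |√γ₁ e^{w₁} + √γ₂ e^{w₂}|²`, where the prefactor is `σ` and the square
expands into the envelopes `γⱼ e^{2 Re wⱼ}` and the interference term
`2√(γ₁γ₂) e^{Re w₁ + Re w₂} cos (Im w₁ - Im w₂)`. In the rotated coordinates,
`Re w₁ = -πr²`, `Re w₂ = -π(r - a)²` and `Im w₁ - Im w₂ = -2πas`.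
-/

open scoped Complex
open Complex (I)

noncomputable def windowedChirp (a b τ ω t : ℝ) : ℂ :=
  cexp (2 * π * I * t * (a + b * t)) * cexp (-π * (t - τ) ^ 2) * cexp (-2 * π * I * ω * t)

/-- The exponent `D - C² / (4B)` of `integral_cexp_quadratic` for `windowedChirp`. -/
noncomputable def chirpExponent (a b τ ω : ℝ) : ℂ :=
  -π * τ ^ 2 + π * (τ + (a - ω) * I) ^ 2 / (1 - 2 * b * I)

lemma windowedChirp_eq_cexp_quadratic (a b τ ω t : ℝ) :
    windowedChirp a b τ ω t =
      cexp (-π * (1 - 2 * b * I) * t ^ 2 + 2 * π * (τ + (a - ω) * I) * t + -π * τ ^ 2) := by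
  simp only [windowedChirp, ← Complex.exp_add]
  ring_nf

lemma re_neg_pi_mul_one_sub_lt_zero (b : ℝ) : (-π * (1 - 2 * b * I)).re < 0 := by
  simp [pi_pos]

lemma integrable_windowedChirp (a b τ ω : ℝ) : Integrable (windowedChirp a b τ ω) := by
  simp_rw [funext (windowedChirp_eq_cexp_quadratic a b τ ω)]
  exact integrable_cexp_quadratic' (re_neg_pi_mul_one_sub_lt_zero b) _ _

lemma integral_windowedChirp (a b τ ω : ℝ) :
    ∫ t, windowedChirp a b τ ω t =
      (1 - 2 * b * I)⁻¹ ^ (1 / 2 : ℂ) * cexp (chirpExponent a b τ ω) := by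
  have hb : 1 - 2 * b * I ≠ 0 := by simp [Complex.ext_iff]
  simp_rw [windowedChirp_eq_cexp_quadratic,
    integral_cexp_quadratic (re_neg_pi_mul_one_sub_lt_zero b), chirpExponent]
  congr 2
  · field_simp
  · field_simp
    ring

lemma integral_add_windowedChirp (c₁ c₂ : ℂ) (a₁ a₂ b τ ω : ℝ) :
    ∫ t, (c₁ * windowedChirp a₁ b τ ω t + c₂ * windowedChirp a₂ b τ ω t) =
      (1 - 2 * b * I)⁻¹ ^ (1 / 2 : ℂ) *
        (c₁ * cexp (chirpExponent a₁ b τ ω) + c₂ * cexp (chirpExponent a₂ b τ ω)) := by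
  rw [integral_add ((integrable_windowedChirp _ _ _ _).const_mul _)
      ((integrable_windowedChirp _ _ _ _).const_mul _),
    integral_const_mul, integral_const_mul, integral_windowedChirp, integral_windowedChirp]
  ring

lemma chirpExponent_eq (a b τ ω : ℝ) :
    chirpExponent a b τ ω =
      ⟨-π * (ω - 2 * b * τ - a) ^ 2 / (1 + 4 * b ^ 2),
        π * (2 * τ * (a - ω) + 2 * b * (τ ^ 2 - (a - ω) ^ 2)) / (1 + 4 * b ^ 2)⟩ := by
  have hb : 1 - 2 * b * I ≠ 0 := by simp [Complex.ext_iff]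
  have hd : (1 + 4 * b ^ 2 : ℝ) ≠ 0 := by positivity
  rw [chirpExponent, Complex.mk_eq_add_mul_I, ← eq_sub_iff_add_eq', div_eq_iff hb,
    Complex.ext_iff]
  simp only [Complex.mul_re, Complex.mul_im, Complex.add_re, Complex.add_im, Complex.sub_re,
    Complex.sub_im, Complex.ofReal_re, Complex.ofReal_im, Complex.I_re, Complex.I_im,
    Complex.neg_re, Complex.neg_im, Complex.one_re, Complex.one_im, Complex.re_ofNat,
    Complex.im_ofNat, pow_two]
  constructor <;> field_simp <;> ring

lemma re_chirpExponent {κ b : ℝ} (hκ : κ ^ 2 = (1 + 4 * b ^ 2)⁻¹) (a τ ω : ℝ) :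
    (chirpExponent a b τ ω).re = -π * (κ * (ω - 2 * b * τ - a)) ^ 2 := by
  rw [chirpExponent_eq]
  linear_combination π * (ω - 2 * b * τ - a) ^ 2 * hκ

lemma im_sub_im_chirpExponent {κ b : ℝ} (hκ : κ ^ 2 = (1 + 4 * b ^ 2)⁻¹) (a₁ a₂ τ ω : ℝ) :
    (chirpExponent a₁ b τ ω).im - (chirpExponent a₂ b τ ω).im =
      -(2 * π * (κ * (a₂ - a₁)) * (κ * (τ + 2 * b * ω - (a₁ + a₂) * b))) := by
  rw [chirpExponent_eq, chirpExponent_eq]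
  linear_combination 2 * π * (a₂ - a₁) * (τ + 2 * b * ω - (a₁ + a₂) * b) * hκ

lemma sq_norm_mul_cexp_add_mul_cexp (c₁ c₂ : ℝ) (w₁ w₂ : ℂ) :
    ‖(c₁ : ℂ) * cexp w₁ + c₂ * cexp w₂‖ ^ 2 =
      c₁ ^ 2 * exp (2 * w₁.re) + c₂ ^ 2 * exp (2 * w₂.re)
        + 2 * (c₁ * c₂) * exp (w₁.re + w₂.re) * cos (w₁.im - w₂.im) := by
  rw [Complex.sq_norm, Complex.normSq_apply]
  simp only [Complex.add_re, Complex.add_im, Complex.mul_re, Complex.mul_im, Complex.ofReal_re,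
    Complex.ofReal_im, Complex.exp_re, Complex.exp_im, zero_mul, sub_zero, add_zero]
  rw [cos_sub, two_mul, two_mul, exp_add, exp_add, exp_add]
  linear_combination (c₁ ^ 2 * exp w₁.re * exp w₁.re) * sin_sq_add_cos_sq w₁.im
    + (c₂ ^ 2 * exp w₂.re * exp w₂.re) * sin_sq_add_cos_sq w₂.im

lemma sq_norm_two_rpow_quarter_mul_cpow_half (b : ℝ) :
    ‖(((2 : ℝ) ^ (1 / 4 : ℝ) : ℝ) : ℂ) * (1 - 2 * b * I)⁻¹ ^ (1 / 2 : ℂ)‖ ^ 2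
      = √(2 / (1 + 4 * b ^ 2)) := by
  have hnorm : ‖1 - 2 * b * I‖ = √(1 + 4 * b ^ 2) := by
    rw [Complex.norm_def, Complex.normSq_apply]; simp; ring_nf
  have hhalf : (1 / 2 : ℂ) = ((1 / 2 : ℝ) : ℂ) := by push_cast; rfl
  have htwo : ((2 : ℝ) ^ (1 / 4 : ℝ)) ^ 2 = √2 := by
    rw [← rpow_natCast, ← rpow_mul (by norm_num), sqrt_eq_rpow]; norm_num
  have hroot : ((√(1 + 4 * b ^ 2))⁻¹ ^ (1 / 2 : ℝ)) ^ 2 = (√(1 + 4 * b ^ 2))⁻¹ := by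
    rw [← rpow_natCast, ← rpow_mul (by positivity)]; norm_num
  rw [hhalf, norm_mul, Complex.norm_real, Complex.norm_cpow_real, norm_inv, hnorm, mul_pow,
    Real.norm_of_nonneg (by positivity), htwo, hroot, sqrt_div' _ (by positivity), div_eq_mul_inv]

/-- The spectrogram of a pair of parallel linear chirps
`x(t) = √γ₁ e^{2iπt(a₁+bt)} + √γ₂ e^{2iπt(a₂+bt)}` in the rotated coordinates
`(r, s)`. -/
theorem spec_pair_of_chirps (a₁ a₂ b γ₁ γ₂ : ℝ) (hγ₁ : 0 < γ₁) (hγ₂ : 0 < γ₂)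
    (σ : ℝ) (hσ : σ = Real.sqrt (2 / (1 + 4 * b ^ 2)))
    (x : ℝ → ℂ)
    (hx : ∀ t : ℝ, x t =
      (Real.sqrt γ₁ : ℂ) * Complex.exp (2 * (π : ℂ) * Complex.I * (t : ℂ)
        * ((a₁ : ℂ) + (b : ℂ) * (t : ℂ)))
      + (Real.sqrt γ₂ : ℂ) * Complex.exp (2 * (π : ℂ) * Complex.I * (t : ℂ)
        * ((a₂ : ℂ) + (b : ℂ) * (t : ℂ))))
    (z : ℂ) (a r s : ℝ)
    (ha : a = σ / Real.sqrt 2 * (a₂ - a₁))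
    (hr : r = σ / Real.sqrt 2 * (z.im - 2 * b * z.re - a₁))
    (hs : s = σ / Real.sqrt 2 * (z.re + 2 * b * z.im - (a₁ + a₂) * b)) :
    Spec x z = σ * (γ₁ * Real.exp (-2 * π * r ^ 2) + γ₂ * Real.exp (-2 * π * (r - a) ^ 2)
      + 2 * Real.sqrt (γ₁ * γ₂) * Real.exp (-π * r ^ 2 - π * (r - a) ^ 2)
        * Real.cos (2 * π * a * s)) := by
  set τ := z.re
  set ω := z.im
  have hspec : Spec x z = ‖(((2 : ℝ) ^ (1 / 4 : ℝ) : ℝ) : ℂ) *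
      ∫ t, ((√γ₁ : ℂ) * windowedChirp a₁ b τ ω t + √γ₂ * windowedChirp a₂ b τ ω t)‖ ^ 2 := by
    rw [Spec, ← integral_const_mul]
    congr 3
    ext t
    rw [hx]
    simp only [windowedChirp]
    ring
  have hκ : (σ / √2) ^ 2 = (1 + 4 * b ^ 2)⁻¹ := by
    rw [div_pow, hσ, sq_sqrt (by positivity), sq_sqrt (by norm_num)]
    field_simp
  have hra : r - a = σ / √2 * (ω - 2 * b * τ - a₂) := by
    rw [hr, ha]
    ring
  rw [hspec, integral_add_windowedChirp, ← mul_assoc, norm_mul, mul_pow,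
    sq_norm_two_rpow_quarter_mul_cpow_half, sq_norm_mul_cexp_add_mul_cexp, ← hσ,
    sq_sqrt hγ₁.le, sq_sqrt hγ₂.le, ← sqrt_mul hγ₁.le, re_chirpExponent hκ, re_chirpExponent hκ,
    im_sub_im_chirpExponent hκ, ← hr, ← hra, ← ha, ← hs, cos_neg]
  ring_nf
end

section
/- Let a₁, a₂, b ∈ ℝ with a₁ < a₂, γ > 0, σ_b = √(2/(1+4b²)), a = (σ_b/√2)(a₂−a₁), and let x(t) = √γ e^{2iπt(a₁+bt)} + √γ e^{2iπt(a₂+bt)}. For N ∈ ℤ, let C_N ⊂ ℂ be the set of z = τ+iω such that (r,s) ∈ [0,a] × [N/a, (N+1)/a], where r = (σ_b/√2)(ω − 2bτ − a₁) and s = (σ_b/√2)(τ + 2bω − (a₁+a₂)b). Then Spec(x) has exactly one zero in C_N, namely the point with coordinates (r,s) = (a/2, (N + 1/2)/a). -/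
open Real MeasureTheory

/-!
The Gabor transform of a linear chirp `e^{2iπt(α+βt)}` is a Gaussian integral: a nonzero
constant depending only on `β` times `exp (chirpPhase α β z)`. So `Spec x` vanishes exactly where
the exponential of the phase difference of the two chirps equals `-1`. In the rotated coordinates
this difference is `-2πa((r - a/2) + i s)`, so the zeros are the points with `r = a/2` and
`a s ∈ ℤ + 1/2`, and the rectangle `C_N` contains exactly one of them.
-/

open Complex

noncomputable section

def chirp (α β : ℝ) (t : ℝ) : ℂ := cexp (2 * π * I * t * (α + β * t))

def gaborWindow (z : ℂ) (t : ℝ) : ℂ :=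
  ((2 : ℝ) ^ ((1 : ℝ) / 4) : ℝ) * cexp (-π * (t - z.re) ^ 2) * cexp (-2 * π * I * z.im * t)

def gaborTransform (y : ℝ → ℂ) (z : ℂ) : ℂ := ∫ t, y t * gaborWindow z t

def chirpPhase (α β : ℝ) (z : ℂ) : ℂ :=
  -π * z.re ^ 2 + π * (z.re + (α - z.im) * I) ^ 2 / (1 - 2 * β * I)

end

lemma spec_eq_norm_gaborTransform_sq (y : ℝ → ℂ) (z : ℂ) :
    Spec y z = ‖gaborTransform y z‖ ^ 2 := by
  simp only [Spec, gaborTransform, gaborWindow, mul_assoc]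

lemma one_sub_two_mul_I_ne_zero (β : ℝ) : (1 : ℂ) - 2 * β * I ≠ 0 := fun h => by
  simpa using congrArg re h

lemma chirp_mul_gaborWindow (α β : ℝ) (z : ℂ) (t : ℝ) :
    chirp α β t * gaborWindow z t = ((2 : ℝ) ^ ((1 : ℝ) / 4) : ℝ) *
      cexp (-π * (1 - 2 * β * I) * t ^ 2 + 2 * π * (z.re + (α - z.im) * I) * t
        + -π * z.re ^ 2) := by
  rw [chirp, gaborWindow, mul_comm]
  simp only [mul_assoc, ← Complex.exp_add]
  congr 2
  ring

lemma re_neg_pi_mul_one_sub_two_mul_I (β : ℝ) : (-π * (1 - 2 * β * I) : ℂ).re < 0 := by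
  simpa using pi_pos

lemma integrable_chirp_mul_gaborWindow (α β : ℝ) (z : ℂ) :
    Integrable (fun t => chirp α β t * gaborWindow z t) := by
  simp only [chirp_mul_gaborWindow]
  exact (integrable_cexp_quadratic' (re_neg_pi_mul_one_sub_two_mul_I β) _ _).const_mul _

lemma gaborTransform_chirp (α β : ℝ) (z : ℂ) :
    gaborTransform (chirp α β) z = ((2 : ℝ) ^ ((1 : ℝ) / 4) : ℝ) *
      ((1 - 2 * β * I)⁻¹ ^ (1 / 2 : ℂ) * cexp (chirpPhase α β z)) := by
  have hβ := one_sub_two_mul_I_ne_zero β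
  have hπ : (π : ℂ) ≠ 0 := ofReal_ne_zero.mpr pi_ne_zero
  simp_rw [gaborTransform, chirp_mul_gaborWindow, integral_const_mul,
    integral_cexp_quadratic (re_neg_pi_mul_one_sub_two_mul_I β), chirpPhase]
  congr 3
  · field_simp
  · field_simp
    ring

lemma exp_add_exp_eq_zero_iff (u v : ℂ) : cexp u + cexp v = 0 ↔ cexp (u - v) = -1 := by
  rw [Complex.exp_sub, div_eq_iff (Complex.exp_ne_zero v), add_eq_zero_iff_eq_neg, neg_one_mul]

lemma spec_chirp_add_chirp_eq_zero_iff {c : ℂ} (hc : c ≠ 0) (α₁ α₂ β : ℝ) (z : ℂ) :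
    Spec (fun t => c * chirp α₁ β t + c * chirp α₂ β t) z = 0 ↔
      cexp (chirpPhase α₁ β z - chirpPhase α₂ β z) = -1 := by
  have hgain : ((2 : ℝ) ^ ((1 : ℝ) / 4) : ℝ) * (1 - 2 * β * I)⁻¹ ^ (1 / 2 : ℂ) ≠ (0 : ℂ) := by
    refine mul_ne_zero (ofReal_ne_zero.mpr (by positivity)) ?_
    simp [cpow_eq_zero_iff, one_sub_two_mul_I_ne_zero β]
  have hsum : gaborTransform (fun t => c * chirp α₁ β t + c * chirp α₂ β t) z =
      c * (((2 : ℝ) ^ ((1 : ℝ) / 4) : ℝ) * (1 - 2 * β * I)⁻¹ ^ (1 / 2 : ℂ)) *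
        (cexp (chirpPhase α₁ β z) + cexp (chirpPhase α₂ β z)) := by
    simp only [gaborTransform, add_mul, mul_assoc c]
    rw [integral_add ((integrable_chirp_mul_gaborWindow α₁ β z).const_mul c)
      ((integrable_chirp_mul_gaborWindow α₂ β z).const_mul c), integral_const_mul,
      integral_const_mul, ← gaborTransform, ← gaborTransform, gaborTransform_chirp, gaborTransform_chirp]
    ring
  rw [spec_eq_norm_gaborTransform_sq, hsum, sq_eq_zero_iff, norm_eq_zero,
    mul_eq_zero_iff_left (mul_ne_zero hc hgain), exp_add_exp_eq_zero_iff]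

lemma chirpPhase_sub_chirpPhase (α₁ α₂ β : ℝ) (z : ℂ) :
    chirpPhase α₁ β z - chirpPhase α₂ β z =
      -2 * π * (α₂ - α₁) * (z.im - (α₁ + α₂) / 2 + z.re * I) / (1 - 2 * β * I) := by
  rw [chirpPhase, chirpPhase, add_sub_add_left_eq_sub, ← sub_div]
  congr 1
  linear_combination (π * (α₁ - α₂) * (α₁ + α₂ - 2 * z.im) : ℂ) * I_sq

lemma chirpPhase_sub_chirpPhase_eq_rotated {k β : ℝ} (hk : k ^ 2 * (1 + 4 * β ^ 2) = 1)
    (α₁ α₂ : ℝ) (z : ℂ) :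
    chirpPhase α₁ β z - chirpPhase α₂ β z =
      -2 * π * ((k * (α₂ - α₁) : ℝ) : ℂ) *
        (((k * (z.im - 2 * β * z.re - α₁) - k * (α₂ - α₁) / 2 : ℝ) : ℂ) +
          ((k * (z.re + 2 * β * z.im - (α₁ + α₂) * β) : ℝ) : ℂ) * I) := by
  set X : ℂ := z.im - (α₁ + α₂) / 2 + z.re * I
  have hrot : ((k * (z.im - 2 * β * z.re - α₁) - k * (α₂ - α₁) / 2 : ℝ) : ℂ) +
      ((k * (z.re + 2 * β * z.im - (α₁ + α₂) * β) : ℝ) : ℂ) * I = k * (1 + 2 * β * I) * X := by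
    push_cast
    linear_combination (-2 * k * β * z.re : ℂ) * I_sq
  have hnorm : (k : ℂ) ^ 2 * ((1 + 2 * β * I) * (1 - 2 * β * I)) = 1 := by
    have hkC : (k : ℂ) ^ 2 * (1 + 4 * β ^ 2) = 1 := by exact_mod_cast hk
    linear_combination hkC - 4 * (k : ℂ) ^ 2 * β ^ 2 * I_sq
  rw [chirpPhase_sub_chirpPhase, div_eq_iff (one_sub_two_mul_I_ne_zero β), hrot]
  push_cast
  linear_combination 2 * π * (α₂ - α₁) * X * hnorm

lemma exp_neg_two_pi_mul_eq_neg_one_iff {a : ℝ} (ha : a ≠ 0) (p q : ℝ) :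
    cexp (-2 * π * a * (p + q * I)) = -1 ↔ p = 0 ∧ ∃ n : ℤ, a * q = n + 1 / 2 := by
  rw [← Complex.exp_pi_mul_I, Complex.exp_eq_exp_iff_exists_int]
  simp only [Complex.ext_iff, neg_mul, neg_re, mul_re, re_ofNat, ofReal_re, im_ofNat, ofReal_im,
    mul_zero, sub_zero, mul_im, zero_mul, add_zero, add_re, I_re, I_im, mul_one, sub_self, add_im,
    zero_add, intCast_re, intCast_im, neg_eq_zero, mul_eq_zero, OfNat.ofNat_ne_zero, pi_ne_zero,
    or_self, ha, false_or, neg_im, exists_and_left, and_congr_right_iff]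
  intro _
  constructor
  · rintro ⟨n, hn⟩
    exact ⟨-n - 1, mul_left_cancel₀ pi_ne_zero (by push_cast; linear_combination (-1 / 2) * hn)⟩
  · rintro ⟨n, hn⟩
    exact ⟨-n - 1, by push_cast; linear_combination (-2 * π) * hn⟩

lemma mem_Icc_and_exists_int_add_half_iff (N : ℤ) (x : ℝ) :
    (x ∈ Set.Icc (N : ℝ) (N + 1) ∧ ∃ n : ℤ, x = n + 1 / 2) ↔ x = N + 1 / 2 := by
  constructor
  · rintro ⟨⟨hlo, hhi⟩, n, rfl⟩
    have hlo' : N - 1 < n := by exact_mod_cast (by linarith : (N : ℝ) - 1 < n)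
    have hhi' : n < N + 1 := by exact_mod_cast (by linarith : (n : ℝ) < N + 1)
    rw [show n = N by omega]
  · rintro rfl
    exact ⟨⟨by linarith, by linarith⟩, N, rfl⟩

lemma existsUnique_rotation_eq (β p q : ℝ) :
    ∃! z : ℂ, z.im - 2 * β * z.re = p ∧ z.re + 2 * β * z.im = q := by
  have hu : 1 + 4 * β ^ 2 ≠ 0 := by positivity
  refine ⟨⟨(q - 2 * β * p) / (1 + 4 * β ^ 2), (p + 2 * β * q) / (1 + 4 * β ^ 2)⟩, ?_, ?_⟩
  · constructor <;> field_simp <;> ring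
  · rintro z ⟨hp, hq⟩
    apply Complex.ext <;> field_simp
    · linear_combination hq - 2 * β * hp
    · linear_combination hp + 2 * β * hq

lemma existsUnique_affine_rotation_eq {k : ℝ} (hk : k ≠ 0) (β c₁ c₂ p q : ℝ) :
    ∃! z : ℂ, k * (z.im - 2 * β * z.re - c₁) = p ∧ k * (z.re + 2 * β * z.im - c₂) = q := by
  have hsolve (w c v : ℝ) : k * (w - c) = v ↔ w = v / k + c := by
    rw [← sub_eq_iff_eq_add, eq_div_iff hk, mul_comm]
  simp only [hsolve]
  exact existsUnique_rotation_eq β _ _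

/-- The spectrogram of a pair of equal-amplitude parallel chirps has exactly one zero in
the rectangle `C_N = {(r,s) ∈ [0,a] × [N/a,(N+1)/a]}`, namely the point with rotated
coordinates `(r,s) = (a/2, (N+1/2)/a)`. -/
theorem unique_zero_in_rectangle (a₁ a₂ b γ : ℝ) (hlt : a₁ < a₂) (hγ : 0 < γ)
    (σ a : ℝ) (hσ : σ = Real.sqrt (2 / (1 + 4 * b ^ 2)))
    (ha : a = σ / Real.sqrt 2 * (a₂ - a₁))
    (x : ℝ → ℂ)
    (hx : ∀ t : ℝ, x t =
      (Real.sqrt γ : ℂ) * Complex.exp (2 * (π : ℂ) * Complex.I * (t : ℂ)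
        * ((a₁ : ℂ) + (b : ℂ) * (t : ℂ)))
      + (Real.sqrt γ : ℂ) * Complex.exp (2 * (π : ℂ) * Complex.I * (t : ℂ)
        * ((a₂ : ℂ) + (b : ℂ) * (t : ℂ))))
    (r s : ℂ → ℝ)
    (hr : ∀ z : ℂ, r z = σ / Real.sqrt 2 * (z.im - 2 * b * z.re - a₁))
    (hs : ∀ z : ℂ, s z = σ / Real.sqrt 2 * (z.re + 2 * b * z.im - (a₁ + a₂) * b))
    (N : ℤ)
    (C : Set ℂ)
    (hC : C = {z : ℂ | r z ∈ Set.Icc 0 a ∧ s z ∈ Set.Icc ((N : ℝ) / a) (((N : ℝ) + 1) / a)}) :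
    (∃! z : ℂ, z ∈ C ∧ Spec x z = 0) ∧
    ∀ z ∈ C, (Spec x z = 0 ↔ (r z = a / 2 ∧ s z = ((N : ℝ) + 1 / 2) / a)) := by
  set k := σ / Real.sqrt 2 with hk_def
  have hk : k ^ 2 * (1 + 4 * b ^ 2) = 1 := by
    rw [hk_def, hσ, div_pow, sq_sqrt (by positivity), sq_sqrt zero_le_two]
    field_simp
  have hk0 : 0 < k := by rw [hk_def, hσ]; positivity
  have ha0 : 0 < a := ha ▸ mul_pos hk0 (sub_pos.mpr hlt)
  have hzero (z : ℂ) : Spec x z = 0 ↔ r z = a / 2 ∧ ∃ n : ℤ, a * s z = n + 1 / 2 := by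
    have hγ' : (Real.sqrt γ : ℂ) ≠ 0 := ofReal_ne_zero.mpr (sqrt_pos.mpr hγ).ne'
    rw [show x = fun t => √γ * chirp a₁ b t + √γ * chirp a₂ b t from funext hx,
      spec_chirp_add_chirp_eq_zero_iff hγ', chirpPhase_sub_chirpPhase_eq_rotated hk, ← ha, ← hr, ← hs,
      exp_neg_two_pi_mul_eq_neg_one_iff ha0.ne', sub_eq_zero]
  have hmem (z : ℂ) : z ∈ C ∧ Spec x z = 0 ↔ r z = a / 2 ∧ s z = ((N : ℝ) + 1 / 2) / a := by
    rw [hC, Set.mem_ofPred_eq, hzero, eq_div_iff ha0.ne', mul_comm,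
      ← mem_Icc_and_exists_int_add_half_iff]
    simp only [Set.mem_Icc, div_le_iff₀ ha0, le_div_iff₀ ha0, mul_comm (s z)]
    constructor
    · rintro ⟨⟨-, hIcc⟩, hr, hn⟩
      exact ⟨hr, hIcc, hn⟩
    · rintro ⟨hr, hIcc, hn⟩
      exact ⟨⟨⟨by linarith, by linarith⟩, hIcc⟩, hr, hn⟩
  refine ⟨?_, fun z hz => ⟨fun h => (hmem z).1 ⟨hz, h⟩, fun h => ((hmem z).2 h).2⟩⟩
  simp only [hmem, hr, hs]
  exact existsUnique_affine_rotation_eq hk0.ne' b a₁ ((a₁ + a₂) * b) _ _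
end

section
/- Let a₁, a₂, b ∈ ℝ with a₁ < a₂, γ > 0, σ_b = √(2/(1+4b²)), a = (σ_b/√2)(a₂−a₁), and assume a ≤ √(2/π). Let x(t) = √γ e^{2iπt(a₁+bt)} + √γ e^{2iπt(a₂+bt)}. For N ∈ ℤ, let C_N ⊂ ℂ be the set of z = τ+iω such that (r,s) ∈ [0,a] × [N/a, (N+1)/a], where r = (σ_b/√2)(ω − 2bτ − a₁) and s = (σ_b/√2)(τ + 2bω − (a₁+a₂)b). Then for every z on the boundary of C_N, Spec(x)(z) ≥ γ σ_b (1 − e^{−πa²})². -/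
open Real MeasureTheory

/-!
Both Gaussian integrals are explicit: in the rotated coordinates `(r, s)` the spectrogram of the
two chirps is `γ σ (u² + v² + 2 u v cos (2π a s))` with `u = e^{-πr²}` and `v = e^{-π(r-a)²}`.
On the edges `r = 0` and `r = a` it is at least `γ σ (u - v)² = γ σ (1 - e^{-πa²})²`. On the
edges `s ∈ ℤ / a` the cosine equals `1`, and the bound follows from `u + v ≥ 1`, which holds
for `0 ≤ r ≤ a ≤ √(2/π)`.
-/

open scoped Complex ComplexConjugate
open Complex (I)

theorem one_le_exp_neg_sq_add_exp_neg_sq {x y : ℝ} (hx : 0 ≤ x) (hy : 0 ≤ y)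
    (hxy : x + y ≤ √2) : 1 ≤ exp (-x ^ 2) + exp (-y ^ 2) := by
  wlog hle : x ≤ y generalizing x y
  · rw [add_comm]
    exact this hy hx (by linarith) (by linarith)
  rcases hx.eq_or_lt with rfl | hx
  · simp [(exp_pos _).le]
  have hs2 : √2 ^ 2 = 2 := sq_sqrt zero_le_two
  have hx_sq : x ^ 2 ≤ 1 / 2 := by nlinarith [sqrt_nonneg 2]
  -- `log (√2 x) ≤ √2 x - 1` and `x² ≤ 1/2 < log 2` give `log (x²) ≤ -(√2 - x)²`.
  have hlog : log (x ^ 2) ≤ -(√2 - x) ^ 2 := by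
    have h := log_le_sub_one_of_pos (by positivity : 0 < √2 * x)
    rw [log_mul (by positivity) hx.ne', log_sqrt zero_le_two] at h
    rw [log_pow]
    push_cast
    nlinarith [log_two_gt_d9]
  have hfar : x ^ 2 ≤ exp (-y ^ 2) :=
    calc x ^ 2 = exp (log (x ^ 2)) := (exp_log (by positivity)).symm
    _ ≤ exp (-(√2 - x) ^ 2) := exp_le_exp.mpr hlog
    _ ≤ exp (-y ^ 2) := exp_le_exp.mpr (by nlinarith)
  have hnear : 1 - x ^ 2 ≤ exp (-x ^ 2) := by linarith [add_one_le_exp (-x ^ 2)]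
  linarith

theorem one_le_exp_neg_pi_sq_add_exp_neg_pi_sq {a r : ℝ} (hclose : a ≤ √(2 / π))
    (hr : r ∈ Set.Icc 0 a) : 1 ≤ exp (-(π * r ^ 2)) + exp (-(π * (r - a) ^ 2)) := by
  have hπ := pi_pos
  have key := one_le_exp_neg_sq_add_exp_neg_sq (mul_nonneg (sqrt_nonneg π) hr.1)
    (mul_nonneg (sqrt_nonneg π) (sub_nonneg.mpr hr.2))
    (calc √π * r + √π * (a - r) = √π * a := by ring
      _ ≤ √π * √(2 / π) := by gcongr
      _ = √2 := by rw [← sqrt_mul hπ.le, mul_div_cancel₀ _ hπ.ne'])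
  rwa [mul_pow, mul_pow, sq_sqrt hπ.le, ← neg_sq (a - r), neg_sub] at key

theorem sub_sq_le_add_sq_add_mul_cos {u v : ℝ} (hu : 0 ≤ u) (hv : 0 ≤ v) (θ : ℝ) :
    (u - v) ^ 2 ≤ u ^ 2 + v ^ 2 + 2 * u * v * cos θ := by
  nlinarith [neg_one_le_cos θ, mul_nonneg hu hv]

theorem cos_two_pi_mul_mul_int_div (a : ℝ) (k : ℤ) : cos (2 * π * a * (k / a)) = 1 := by
  rcases eq_or_ne a 0 with rfl | ha
  · simp
  · rw [mul_assoc, mul_div_cancel₀ _ ha, mul_comm]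
    exact cos_int_mul_two_pi k

noncomputable def chirpPairProfile (a r s : ℝ) : ℝ :=
  exp (-(π * r ^ 2)) ^ 2 + exp (-(π * (r - a) ^ 2)) ^ 2
    + 2 * exp (-(π * r ^ 2)) * exp (-(π * (r - a) ^ 2)) * cos (2 * π * a * s)

theorem sq_one_sub_exp_le_chirpPairProfile {a r s : ℝ} (hclose : a ≤ √(2 / π))
    (hr : r ∈ Set.Icc 0 a) (hedge : r = 0 ∨ r = a ∨ cos (2 * π * a * s) = 1) :
    (1 - exp (-(π * a ^ 2))) ^ 2 ≤ chirpPairProfile a r s := by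
  have hE : exp (-(π * a ^ 2)) ≤ 1 := exp_le_one_iff.mpr (by nlinarith [pi_pos])
  rcases hedge with rfl | rfl | hcos
  · simpa [chirpPairProfile] using
      sub_sq_le_add_sq_add_mul_cos zero_le_one (exp_pos (-(π * a ^ 2))).le (2 * π * a * s)
  · have h := sub_sq_le_add_sq_add_mul_cos (exp_pos (-(π * r ^ 2))).le zero_le_one (2 * π * r * s)
    rw [sub_sq_comm] at h
    simpa [chirpPairProfile] using h
  · have hsum := one_le_exp_neg_pi_sq_add_exp_neg_pi_sq hclose hr
    rw [chirpPairProfile, hcos]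
    nlinarith [exp_pos (-(π * a ^ 2)), exp_pos (-(π * r ^ 2)), exp_pos (-(π * (r - a) ^ 2))]

theorem mem_Icc_and_eq_endpoint_of_mem_frontier_Icc {α : Type*} [LinearOrder α]
    [TopologicalSpace α] [OrderTopology α] [DenselyOrdered α] [NoMinOrder α] [NoMaxOrder α]
    {a b x : α} (hx : x ∈ frontier (Set.Icc a b)) : x ∈ Set.Icc a b ∧ (x = a ∨ x = b) := by
  rcases le_or_gt a b with hab | hab
  · rw [frontier_Icc hab] at hx
    rcases hx with rfl | rfl
    · exact ⟨Set.left_mem_Icc.mpr hab, .inl rfl⟩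
    · exact ⟨Set.right_mem_Icc.mpr hab, .inr rfl⟩
  · simp [Set.Icc_eq_empty_of_lt hab] at hx

theorem mem_Icc_and_eq_endpoint_of_mem_frontier {X : Type*} [TopologicalSpace X]
    {f g : X → ℝ} (hf : Continuous f) (hg : Continuous g) {a b c d : ℝ} {z : X}
    (hz : z ∈ frontier {z | f z ∈ Set.Icc a b ∧ g z ∈ Set.Icc c d}) :
    f z ∈ Set.Icc a b ∧ (f z = a ∨ f z = b ∨ g z = c ∨ g z = d) := by
  have hmem : (f z, g z) ∈ frontier (Set.Icc a b ×ˢ Set.Icc c d) :=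
    (hf.prodMk hg).frontier_preimage_subset _ hz
  rw [frontier_prod_eq, closure_Icc, closure_Icc] at hmem
  rcases hmem with ⟨hfz, hgz⟩ | ⟨hfz, -⟩
  · obtain ⟨-, hgz⟩ := mem_Icc_and_eq_endpoint_of_mem_frontier_Icc hgz
    exact ⟨hfz, .inr (.inr hgz)⟩
  · obtain ⟨hfz, hfz'⟩ := mem_Icc_and_eq_endpoint_of_mem_frontier_Icc hfz
    exact ⟨hfz, hfz'.elim .inl (.inr ∘ .inl)⟩

section ChirpTransform

variable (b τ ω A : ℝ)

noncomputable def chirpGaborRe : ℝ := -(π * (2 * b * τ + A - ω) ^ 2) / (1 + 4 * b ^ 2)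

noncomputable def chirpGaborIm : ℝ :=
  π * (2 * τ * (A - ω) + 2 * b * (τ ^ 2 - (A - ω) ^ 2)) / (1 + 4 * b ^ 2)

theorem chirp_mul_gaussian_window_eq (t : ℝ) :
    cexp (2 * π * I * t * (A + b * t)) * cexp (-π * (t - τ) ^ 2) * cexp (-2 * π * I * ω * t)
      = cexp (π * (2 * I * b - 1) * t ^ 2 + 2 * π * (I * A + τ - I * ω) * t + -π * τ ^ 2) := by
  rw [← Complex.exp_add, ← Complex.exp_add]
  ring_nf

theorem re_pi_mul_two_I_mul_sub_one_neg : (π * (2 * I * b - 1) : ℂ).re < 0 := by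
  simp [pi_pos]

theorem chirp_window_exponent_eq :
    -π * τ ^ 2 - (2 * π * (I * A + τ - I * ω)) ^ 2 / (4 * (π * (2 * I * b - 1)))
      = chirpGaborRe b τ ω A + chirpGaborIm b τ ω A * I := by
  have hK : ((1 + 4 * b ^ 2 : ℝ) : ℂ) ≠ 0 := Complex.ofReal_ne_zero.mpr (by positivity)
  have hB : (2 * I * b - 1 : ℂ) ≠ 0 := fun h ↦ by simpa using congrArg Complex.re h
  rw [chirpGaborRe, chirpGaborIm]
  push_cast at hK ⊢
  field_simp
  ring_nf
  simp only [Complex.I_sq]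
  ring_nf

theorem integrable_chirp_mul_gaussian_window :
    Integrable fun t : ℝ ↦ cexp (2 * π * I * t * (A + b * t)) * cexp (-π * (t - τ) ^ 2)
      * cexp (-2 * π * I * ω * t) := by
  simp_rw [chirp_mul_gaussian_window_eq]
  exact integrable_cexp_quadratic' (re_pi_mul_two_I_mul_sub_one_neg b) _ _

theorem integral_chirp_mul_gaussian_window :
    ∫ t : ℝ, cexp (2 * π * I * t * (A + b * t)) * cexp (-π * (t - τ) ^ 2)
        * cexp (-2 * π * I * ω * t)
      = (π / -(π * (2 * I * b - 1))) ^ (1 / 2 : ℂ)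
        * cexp (chirpGaborRe b τ ω A + chirpGaborIm b τ ω A * I) := by
  simp_rw [chirp_mul_gaussian_window_eq,
    integral_cexp_quadratic (re_pi_mul_two_I_mul_sub_one_neg b), chirp_window_exponent_eq]

theorem sq_norm_gaussian_chirp_factor :
    ‖(π / -(π * (2 * I * b - 1)) : ℂ) ^ (1 / 2 : ℂ)‖ ^ 2 = 1 / √(1 + 4 * b ^ 2) := by
  have hnorm : ‖(π / -(π * (2 * I * b - 1)) : ℂ)‖ = 1 / √(1 + 4 * b ^ 2) := by
    rw [norm_div, norm_neg, norm_mul, Complex.norm_real, norm_of_nonneg pi_pos.le,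
      div_mul_cancel_left₀ pi_ne_zero, one_div, Complex.norm_def,
      show (2 * I * b - 1 : ℂ) = ((-1 : ℝ) : ℂ) + ((2 * b : ℝ) : ℂ) * I by push_cast; ring,
      Complex.normSq_add_mul_I]
    ring_nf
  rw [show (1 / 2 : ℂ) = ((1 / 2 : ℝ) : ℂ) by norm_num, Complex.norm_cpow_real, hnorm,
    ← sqrt_eq_rpow, sq_sqrt (by positivity)]

theorem sq_div_sqrt_two_of_eq_sqrt {σ : ℝ} (hσ : σ = √(2 / (1 + 4 * b ^ 2))) :
    (σ / √2) ^ 2 = 1 / (1 + 4 * b ^ 2) := by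
  rw [div_pow, hσ, sq_sqrt (by positivity), sq_sqrt zero_le_two]
  ring

theorem chirpGaborRe_eq {σ : ℝ} (hσ : σ = √(2 / (1 + 4 * b ^ 2))) :
    chirpGaborRe b τ ω A = -(π * (σ / √2 * (ω - 2 * b * τ - A)) ^ 2) := by
  rw [chirpGaborRe, mul_pow, sq_div_sqrt_two_of_eq_sqrt b hσ]
  ring

theorem chirpGaborIm_sub_eq {σ : ℝ} (hσ : σ = √(2 / (1 + 4 * b ^ 2))) (A₁ A₂ : ℝ) :
    chirpGaborIm b τ ω A₁ - chirpGaborIm b τ ω A₂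
      = -(2 * π * (σ / √2 * (A₂ - A₁)) * (σ / √2 * (τ + 2 * b * ω - (A₁ + A₂) * b))) := by
  rw [chirpGaborIm, chirpGaborIm, show ∀ c d : ℝ, 2 * π * (σ / √2 * c) * (σ / √2 * d)
    = 2 * π * (σ / √2) ^ 2 * c * d from fun c d ↦ by ring, sq_div_sqrt_two_of_eq_sqrt b hσ]
  ring

end ChirpTransform

theorem sq_norm_exp_add_exp (X₁ Y₁ X₂ Y₂ : ℝ) :
    ‖cexp (X₁ + Y₁ * I) + cexp (X₂ + Y₂ * I)‖ ^ 2
      = exp X₁ ^ 2 + exp X₂ ^ 2 + 2 * exp X₁ * exp X₂ * cos (Y₁ - Y₂) := by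
  have hsum : (X₁ + Y₁ * I : ℂ) + conj (X₂ + Y₂ * I : ℂ)
      = ((X₁ + X₂ : ℝ) : ℂ) + ((Y₁ - Y₂ : ℝ) : ℂ) * I := by
    simp only [map_add, map_mul, Complex.conj_ofReal, Complex.conj_I]
    push_cast
    ring
  rw [Complex.sq_norm, Complex.normSq_add, ← Complex.exp_conj, ← Complex.exp_add, hsum,
    Complex.exp_re, Complex.normSq_eq_norm_sq, Complex.normSq_eq_norm_sq, Complex.norm_exp,
    Complex.norm_exp]
  simp only [Complex.add_re, Complex.add_im, Complex.mul_I_re, Complex.mul_I_im,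
    Complex.ofReal_re, Complex.ofReal_im, neg_zero, add_zero, zero_add, exp_add]
  ring

theorem sq_norm_sqrt_mul_two_rpow_quarter {γ : ℝ} (hγ : 0 ≤ γ) :
    ‖((√γ * 2 ^ (1 / 4 : ℝ) : ℝ) : ℂ)‖ ^ 2 = γ * √2 := by
  rw [Complex.norm_real, norm_of_nonneg (by positivity), mul_pow, sq_sqrt hγ,
    ← rpow_natCast, ← rpow_mul zero_le_two, sqrt_eq_rpow]
  norm_num

theorem spec_chirpPair {a₁ a₂ b γ σ a : ℝ} (hγ : 0 ≤ γ) (hσ : σ = √(2 / (1 + 4 * b ^ 2)))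
    (ha : a = σ / √2 * (a₂ - a₁)) (z : ℂ) :
    Spec (fun t : ℝ ↦ (√γ : ℂ) * cexp (2 * π * I * t * (a₁ + b * t))
        + (√γ : ℂ) * cexp (2 * π * I * t * (a₂ + b * t))) z
      = γ * σ * chirpPairProfile a (σ / √2 * (z.im - 2 * b * z.re - a₁))
          (σ / √2 * (z.re + 2 * b * z.im - (a₁ + a₂) * b)) := by
  have hsplit : (fun t : ℝ ↦ ((√γ : ℂ) * cexp (2 * π * I * t * (a₁ + b * t))
        + (√γ : ℂ) * cexp (2 * π * I * t * (a₂ + b * t))) * ((2 ^ (1 / 4 : ℝ) : ℝ) : ℂ)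
        * cexp (-π * (t - z.re) ^ 2) * cexp (-2 * π * I * z.im * t))
      = fun t : ℝ ↦ ((√γ * 2 ^ (1 / 4 : ℝ) : ℝ) : ℂ) *
        (cexp (2 * π * I * t * (a₁ + b * t)) * cexp (-π * (t - z.re) ^ 2)
            * cexp (-2 * π * I * z.im * t)
          + cexp (2 * π * I * t * (a₂ + b * t)) * cexp (-π * (t - z.re) ^ 2)
            * cexp (-2 * π * I * z.im * t)) := by
    funext t
    push_cast
    ring
  have hσ_eq : √2 * (1 / √(1 + 4 * b ^ 2)) = σ := by
    rw [hσ, sqrt_div zero_le_two, mul_one_div]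
  have hr_sub_a : σ / √2 * (z.im - 2 * b * z.re - a₂)
      = σ / √2 * (z.im - 2 * b * z.re - a₁) - a := by
    rw [ha]
    ring
  rw [Spec, hsplit, integral_const_mul,
    integral_add (integrable_chirp_mul_gaussian_window ..)
      (integrable_chirp_mul_gaussian_window ..),
    integral_chirp_mul_gaussian_window, integral_chirp_mul_gaussian_window, ← mul_add,
    norm_mul, norm_mul, mul_pow, mul_pow, sq_norm_sqrt_mul_two_rpow_quarter hγ,
    sq_norm_gaussian_chirp_factor, sq_norm_exp_add_exp, chirpGaborRe_eq b _ _ _ hσ,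
    chirpGaborRe_eq b _ _ _ hσ, chirpGaborIm_sub_eq b _ _ hσ, cos_neg, hr_sub_a, ← ha,
    chirpPairProfile, ← hσ_eq]
  ring

theorem spec_lower_bound_on_boundary_general (a₁ a₂ b γ : ℝ) (hγ : 0 < γ)
    (σ a : ℝ) (hσ : σ = Real.sqrt (2 / (1 + 4 * b ^ 2)))
    (ha : a = σ / Real.sqrt 2 * (a₂ - a₁))
    (hclose : a ≤ Real.sqrt (2 / π))
    (x : ℝ → ℂ)
    (hx : ∀ t : ℝ, x t =
      (Real.sqrt γ : ℂ) * Complex.exp (2 * (π : ℂ) * Complex.I * (t : ℂ)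
        * ((a₁ : ℂ) + (b : ℂ) * (t : ℂ)))
      + (Real.sqrt γ : ℂ) * Complex.exp (2 * (π : ℂ) * Complex.I * (t : ℂ)
        * ((a₂ : ℂ) + (b : ℂ) * (t : ℂ))))
    (r s : ℂ → ℝ)
    (hr : ∀ z : ℂ, r z = σ / Real.sqrt 2 * (z.im - 2 * b * z.re - a₁))
    (hs : ∀ z : ℂ, s z = σ / Real.sqrt 2 * (z.re + 2 * b * z.im - (a₁ + a₂) * b))
    (N : ℤ)
    (C : Set ℂ)
    (hC : C = {z : ℂ | r z ∈ Set.Icc 0 a ∧ s z ∈ Set.Icc ((N : ℝ) / a) (((N : ℝ) + 1) / a)}) :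
    ∀ z ∈ frontier C, γ * σ * (1 - Real.exp (-π * a ^ 2)) ^ 2 ≤ Spec x z := by
  intro z hz
  have hr_cont : Continuous r := by rw [funext hr]; fun_prop
  have hs_cont : Continuous s := by rw [funext hs]; fun_prop
  rw [hC] at hz
  obtain ⟨hrz, hedge⟩ := mem_Icc_and_eq_endpoint_of_mem_frontier hr_cont hs_cont hz
  rw [funext hx, spec_chirpPair hγ.le hσ ha, ← hr, ← hs, neg_mul]
  refine mul_le_mul_of_nonneg_left (sq_one_sub_exp_le_chirpPairProfile hclose hrz ?_)
    (by rw [hσ]; positivity)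
  rcases hedge with h | h | h | h
  · exact .inl h
  · exact .inr (.inl h)
  · exact .inr (.inr (h ▸ cos_two_pi_mul_mul_int_div a N))
  · exact .inr (.inr (by rw [h]; exact_mod_cast cos_two_pi_mul_mul_int_div a (N + 1)))

/-- If the two equal-amplitude parallel chirps are close enough (`a ≤ √(2/π)`), then on
the boundary of the rectangle `C_N = {(r,s) ∈ [0,a] × [N/a,(N+1)/a]}` the spectrogram of
the pair of chirps is at least `γ σ_b (1 − e^{−πa²})²`. -/
theorem spec_lower_bound_on_boundary (a₁ a₂ b γ : ℝ) (hlt : a₁ < a₂) (hγ : 0 < γ)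
    (σ a : ℝ) (hσ : σ = Real.sqrt (2 / (1 + 4 * b ^ 2)))
    (ha : a = σ / Real.sqrt 2 * (a₂ - a₁))
    (hclose : a ≤ Real.sqrt (2 / π))
    (x : ℝ → ℂ)
    (hx : ∀ t : ℝ, x t =
      (Real.sqrt γ : ℂ) * Complex.exp (2 * (π : ℂ) * Complex.I * (t : ℂ)
        * ((a₁ : ℂ) + (b : ℂ) * (t : ℂ)))
      + (Real.sqrt γ : ℂ) * Complex.exp (2 * (π : ℂ) * Complex.I * (t : ℂ)
        * ((a₂ : ℂ) + (b : ℂ) * (t : ℂ))))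
    (r s : ℂ → ℝ)
    (hr : ∀ z : ℂ, r z = σ / Real.sqrt 2 * (z.im - 2 * b * z.re - a₁))
    (hs : ∀ z : ℂ, s z = σ / Real.sqrt 2 * (z.re + 2 * b * z.im - (a₁ + a₂) * b))
    (N : ℤ)
    (C : Set ℂ)
    (hC : C = {z : ℂ | r z ∈ Set.Icc 0 a ∧ s z ∈ Set.Icc ((N : ℝ) / a) (((N : ℝ) + 1) / a)}) :
    ∀ z ∈ frontier C, γ * σ * (1 - Real.exp (-π * a ^ 2)) ^ 2 ≤ Spec x z :=
  spec_lower_bound_on_boundary_general a₁ a₂ b γ hγ σ a hσ ha hclose x hx r s hr hs N C hC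
end
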